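/- arXiv:1605.08473 — 4 statements merged into one kernel-verified Lean document; each statement's English description precedes it below -/
import Mathlib

section
/- Let R_{10} be a t×t symmetric positive definite matrix, and for permutation matrices P_2,...,P_b define f(P_2,...,P_b) = det(R_{10} + P_2^T R_{10} P_2 + ... + P_b^T R_{10} P_b). Then f is minimized when P_2 = ... = P_b = I_t, with minimum value b^t·det(R_{10}). -/
/-!
Conjugating by a permutation matrix only reindexes `R`, so every summand `Pⱼᵀ R Pⱼ` is positive
definite with determinant `det R`. Minkowski's determinant inequality
`det (A + B) ^ (1/t) ≥ det A ^ (1/t) + det B ^ (1/t)` then gives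
`det (∑ⱼ Pⱼᵀ R Pⱼ) ^ (1/t) ≥ b · det R ^ (1/t)`, with equality when all `Pⱼ = 1`.
Writing `A = Sᴴ S` and `B = Sᴴ C S`, Minkowski's inequality reduces to
`1 + det C ^ (1/t) ≤ det (1 + C) ^ (1/t)`, the superadditivity of the geometric mean applied to
the eigenvalues of `C`; that in turn is AM–GM applied twice after dividing by `∏ (1 + λᵢ)`.
-/

open Matrix

def IsPermMatrix {t : ℕ} (P : Matrix (Fin t) (Fin t) ℝ) : Prop :=
  ∃ σ : Equiv.Perm (Fin t), P = σ.permMatrix ℝ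

open Finset

theorem Real.prod_rpow_add_prod_rpow_le_prod_add_rpow {ι : Type*} [Fintype ι] [Nonempty ι]
    {a b : ι → ℝ} (ha : ∀ i, 0 ≤ a i) (hb : ∀ i, 0 < b i) :
    (∏ i, a i) ^ (Fintype.card ι : ℝ)⁻¹ + (∏ i, b i) ^ (Fintype.card ι : ℝ)⁻¹
      ≤ (∏ i, (a i + b i)) ^ (Fintype.card ι : ℝ)⁻¹ := by
  set n : ℝ := (Fintype.card ι : ℝ)
  have hab : ∀ i, 0 < a i + b i := fun i => add_pos_of_nonneg_of_pos (ha i) (hb i)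
  have geom_le_arith : ∀ z : ι → ℝ, (∀ i, 0 ≤ z i) → (∏ i, z i) ^ n⁻¹ ≤ (∑ i, z i) / n := by
    intro z hz
    simpa [n] using Real.geom_mean_le_arith_mean univ 1 z (by simp)
      (by simp [Fintype.card_pos]) fun i _ => hz i
  have factor : ∀ c : ι → ℝ, (∀ i, 0 ≤ c i) →
      (∏ i, c i) ^ n⁻¹ = (∏ i, c i / (a i + b i)) ^ n⁻¹ * (∏ i, (a i + b i)) ^ n⁻¹ := by
    intro c hc
    rw [← Real.mul_rpow (prod_nonneg fun i _ => div_nonneg (hc i) (hab i).le)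
      (prod_nonneg fun i _ => (hab i).le), ← prod_mul_distrib]
    simp_rw [div_mul_cancel₀ _ (hab _).ne']
  have means_sum_to_one :
      (∑ i, a i / (a i + b i)) / n + (∑ i, b i / (a i + b i)) / n = 1 := by
    rw [← add_div, ← sum_add_distrib]
    simp_rw [← add_div, div_self (hab _).ne']
    simp [n]
  rw [factor a ha, factor b fun i => (hb i).le, ← add_mul]
  refine mul_le_of_le_one_left (Real.rpow_nonneg (prod_nonneg fun i _ => (hab i).le) _) ?_
  calc _ ≤ (∑ i, a i / (a i + b i)) / n + (∑ i, b i / (a i + b i)) / n :=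
        add_le_add (geom_le_arith _ fun i => div_nonneg (ha i) (hab i).le)
          (geom_le_arith _ fun i => div_nonneg (hb i).le (hab i).le)
    _ = 1 := means_sum_to_one

theorem Matrix.transpose_permMatrix_mul_mul_permMatrix {n R : Type*} [Fintype n] [DecidableEq n]
    [NonAssocSemiring R] (σ : Equiv.Perm n) (M : Matrix n n R) :
    (σ.permMatrix R)ᵀ * M * σ.permMatrix R = M.submatrix σ.symm σ.symm := by
  rw [transpose_permMatrix, PEquiv.toMatrix_toPEquiv_mul, PEquiv.mul_toMatrix_toPEquiv,
    submatrix_submatrix]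
  rfl

theorem Matrix.IsHermitian.det_one_add {𝕜 n : Type*} [RCLike 𝕜] [Fintype n] [DecidableEq n]
    {A : Matrix n n 𝕜} (hA : A.IsHermitian) :
    (1 + A).det = ∏ i, (1 + (hA.eigenvalues i : 𝕜)) := by
  conv_lhs => rw [hA.spectral_theorem,
    ← map_one (Unitary.conjStarAlgAut 𝕜 _ hA.eigenvectorUnitary), ← map_add]
  rw [← diagonal_one, diagonal_add]
  simp [-Unitary.conjStarAlgAut_apply]

section Minkowski

variable {n : Type*} [Fintype n] [DecidableEq n] [Nonempty n]

theorem Matrix.PosSemidef.one_add_det_rpow_le_det_one_add_rpow {A : Matrix n n ℝ}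
    (hA : A.PosSemidef) :
    1 + A.det ^ (Fintype.card n : ℝ)⁻¹ ≤ (1 + A).det ^ (Fintype.card n : ℝ)⁻¹ := by
  have h := Real.prod_rpow_add_prod_rpow_le_prod_add_rpow (b := fun _ => 1)
    hA.eigenvalues_nonneg fun _ => one_pos
  rw [prod_const_one, Real.one_rpow, add_comm] at h
  rw [hA.isHermitian.det_one_add, hA.isHermitian.det_eq_prod_eigenvalues]
  simpa [add_comm] using h

theorem Matrix.PosDef.det_rpow_add_det_rpow_le_det_add_rpow {A B : Matrix n n ℝ}
    (hA : A.PosDef) (hB : B.PosSemidef) :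
    A.det ^ (Fintype.card n : ℝ)⁻¹ + B.det ^ (Fintype.card n : ℝ)⁻¹
      ≤ (A + B).det ^ (Fintype.card n : ℝ)⁻¹ := by
  set r : ℝ := (Fintype.card n : ℝ)⁻¹
  obtain ⟨S, hS, hSA⟩ : ∃ S : Matrix n n ℝ, IsUnit S ∧ Sᴴ * S = A := by
    open scoped MatrixOrder in
    refine ⟨CFC.sqrt A, (CFC.isUnit_sqrt_iff A hA.posSemidef.nonneg).2 hA.isUnit, ?_⟩
    rw [(CFC.sqrt_nonneg A).posSemidef.isHermitian.eq,
      CFC.sqrt_mul_sqrt_self A hA.posSemidef.nonneg]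
  have hS_inv : S⁻¹ * S = 1 := nonsing_inv_mul _ ((isUnit_iff_isUnit_det S).1 hS)
  set C := (S⁻¹)ᴴ * B * S⁻¹
  have hC : C.PosSemidef := hB.conjTranspose_mul_mul_same _
  have hB_eq : B = Sᴴ * C * S := by
    simp only [C, Matrix.mul_assoc, hS_inv]
    rw [← Matrix.mul_assoc, ← conjTranspose_mul, hS_inv, conjTranspose_one, Matrix.one_mul,
      Matrix.mul_one]
  have hAB : A + B = Sᴴ * (1 + C) * S := by
    rw [hB_eq, ← hSA, Matrix.mul_add, Matrix.add_mul, Matrix.mul_one]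
  have det_conj : ∀ M, (Sᴴ * M * S).det = A.det * M.det := fun M => by
    rw [← hSA, det_mul, det_mul, det_mul]
    ring
  have hA_pos : 0 < A.det := hA.det_pos
  calc A.det ^ r + B.det ^ r = A.det ^ r * (1 + C.det ^ r) := by
        rw [hB_eq, det_conj, Real.mul_rpow hA_pos.le hC.det_nonneg, mul_one_add]
    _ ≤ A.det ^ r * (1 + C).det ^ r := by
        gcongr
        exact hC.one_add_det_rpow_le_det_one_add_rpow
    _ = (A + B).det ^ r := by
        rw [hAB, det_conj, Real.mul_rpow hA_pos.le (PosSemidef.one.add hC).det_nonneg]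

theorem Matrix.sum_det_rpow_le_det_sum_rpow {ι : Type*} (s : Finset ι) {A : ι → Matrix n n ℝ}
    (hA : ∀ i ∈ s, (A i).PosDef) :
    ∑ i ∈ s, (A i).det ^ (Fintype.card n : ℝ)⁻¹
      ≤ (∑ i ∈ s, A i).det ^ (Fintype.card n : ℝ)⁻¹ := by
  induction s using Finset.cons_induction with
  | empty =>
    simp only [sum_empty]
    exact Real.rpow_nonneg PosSemidef.zero.det_nonneg _
  | cons i s hi ih =>
    obtain ⟨hAi, hAs⟩ := (forall_mem_cons hi _).1 hA
    rw [sum_cons, sum_cons]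
    calc _ ≤ (A i).det ^ (Fintype.card n : ℝ)⁻¹ + (∑ j ∈ s, A j).det ^ (Fintype.card n : ℝ)⁻¹ :=
          add_le_add_right (ih hAs) _
      _ ≤ _ := hAi.det_rpow_add_det_rpow_le_det_add_rpow
          (posSemidef_sum s fun j hj => (hAs j hj).posSemidef)

end Minkowski

theorem stmt9_general {t b : ℕ}
    (R : Matrix (Fin t) (Fin t) ℝ) (hR : R.PosDef)
    (P : Fin b → Matrix (Fin t) (Fin t) ℝ)
    (hP : ∀ j, IsPermMatrix (P j)) :
    (b : ℝ) ^ t * R.det ≤ (∑ j, (P j)ᵀ * R * P j).det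
      ∧ ((∀ j, P j = 1) → (∑ j, (P j)ᵀ * R * P j).det = (b : ℝ) ^ t * R.det) := by
  refine ⟨?_, fun hP1 => ?_⟩
  · obtain rfl | ht := Nat.eq_zero_or_pos t
    · simp
    have : Nonempty (Fin t) := ⟨⟨0, ht⟩⟩
    choose σ hσ using hP
    have hR_conj : ∀ j, (R.submatrix (σ j).symm (σ j).symm).PosDef :=
      fun j => hR.submatrix (σ j).symm.injective
    have minkowski := sum_det_rpow_le_det_sum_rpow univ fun j _ => hR_conj j
    simp only [det_submatrix_equiv_self, sum_const, card_univ, Fintype.card_fin,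
      nsmul_eq_mul] at minkowski
    simp only [hσ, transpose_permMatrix_mul_mul_permMatrix]
    calc (b : ℝ) ^ t * R.det = ((b : ℝ) * R.det ^ (t : ℝ)⁻¹) ^ t := by
          rw [mul_pow, Real.rpow_inv_natCast_pow hR.det_pos.le ht.ne']
      _ ≤ ((∑ j, R.submatrix (σ j).symm (σ j).symm).det ^ (t : ℝ)⁻¹) ^ t :=
          pow_le_pow_left₀ (mul_nonneg b.cast_nonneg (Real.rpow_nonneg hR.det_pos.le _))
            minkowski t
      _ = _ := Real.rpow_inv_natCast_pow
          (posSemidef_sum univ fun j _ => (hR_conj j).posSemidef).det_nonneg ht.ne'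
  · simp only [hP1, transpose_one, Matrix.one_mul, Matrix.mul_one, sum_const, card_univ,
      Fintype.card_fin, ← Nat.cast_smul_eq_nsmul ℝ, det_smul]

/-- The map (P_2,…,P_b) ↦ det(R + P_2ᵀRP_2 + ⋯ + P_bᵀRP_b) over permutation
matrices (with P_1 = I_t) is minimized when all P_j = I_t, with minimum value
b^t·det(R).  Here R is symmetric positive definite. -/
theorem stmt9 {t b : ℕ} (hb : 0 < b)
    (R : Matrix (Fin t) (Fin t) ℝ) (hR : R.PosDef)
    (P : Fin b → Matrix (Fin t) (Fin t) ℝ)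
    (hP0 : ∀ j : Fin b, (j : ℕ) = 0 → P j = 1)
    (hP : ∀ j, IsPermMatrix (P j)) :
    (b : ℝ) ^ t * R.det ≤ (∑ j, (P j)ᵀ * R * P j).det
      ∧ ((∀ j, P j = 1) → (∑ j, (P j)ᵀ * R * P j).det = (b : ℝ) ^ t * R.det) :=
  stmt9_general R hR P hP
end

section
/- For λ ∈ (0,1) and V the t×t matrix with V_{ij} = λ^{|i−j|}, one has 1_t^T V^{-1} 1_t = (t − 2(t−1)λ + (t−2)λ²)/(1−λ²), and this quantity is strictly positive. -/
/-!
The inverse of the AR(1) correlation matrix `(a ^ |i - j|)` is `(1 - a²)⁻¹` times the tridiagonal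
matrix `tridiag(-a; 1, 1 + a², …, 1 + a², 1; -a)`. To check this row by row, note that
`g k = a ^ |k - j|` is geometric with ratio `a` on each side of `j`, so each one-sided difference
`a² g i - a g (i ± 1)` either vanishes or equals `-(1 - a²) g i`, and only the diagonal survives.
Summing the entries of the tridiagonal matrix then gives the numerator `t - 2(t-1)a + (t-2)a²`,
which is `t (1 - a)² + 2a (1 - a) > 0`.
-/

open Matrix Finset

section AR1

variable {R : Type*} [CommRing R] (t : ℕ) (a : R)

def ar1Corr : Matrix (Fin t) (Fin t) R := of fun i j => a ^ ((i : ℤ) - j).natAbs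

/-- Row `i` of `tridiag(-a; 1, 1 + a², …, 1 + a², 1; -a)`, written as `(1 - a²) eᵢ` plus
`a² eᵢ - a eᵢ₋₁` when `i` has a left neighbour and `a² eᵢ - a eᵢ₊₁` when it has a right one. -/
def ar1PrecEntry (i k : ℕ) : R :=
  (if k = i then 1 - a ^ 2 else 0)
    + (if 0 < i then (if k = i then a ^ 2 else 0) - (if k = i - 1 then a else 0) else 0)
    + (if i + 1 < t then (if k = i then a ^ 2 else 0) - (if k = i + 1 then a else 0) else 0)

def ar1Prec : Matrix (Fin t) (Fin t) R := of fun i k => ar1PrecEntry t a i k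

variable {t a}

theorem sum_range_ar1PrecEntry_mul (g : ℕ → R) {i : ℕ} (hi : i < t) :
    ∑ k ∈ range t, ar1PrecEntry t a i k * g k
      = (1 - a ^ 2) * g i + (if 0 < i then a ^ 2 * g i - a * g (i - 1) else 0)
        + (if i + 1 < t then a ^ 2 * g i - a * g (i + 1) else 0) := by
  simp only [ar1PrecEntry, add_mul, sub_mul, ite_mul, zero_mul, sum_add_distrib]
  split_ifs with h0 h1 h1 <;> simp [sum_ite_eq', hi, h1] <;> omega

theorem pow_natAbs_sub_succ_left (a : R) {i j : ℕ} (h : j ≤ i) :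
    a ^ (((i + 1 : ℕ) : ℤ) - j).natAbs = a * a ^ ((i : ℤ) - j).natAbs := by
  rw [← pow_succ']; congr 1; omega

theorem pow_natAbs_sub_succ_right (a : R) {i j : ℕ} (h : i < j) :
    a ^ ((i : ℤ) - j).natAbs = a * a ^ (((i + 1 : ℕ) : ℤ) - j).natAbs := by
  rw [← pow_succ']; congr 1; omega

theorem ar1Prec_mul_ar1Corr : ar1Prec t a * ar1Corr t a = (1 - a ^ 2) • 1 := by
  ext i j
  set g : ℕ → R := fun k => a ^ ((k : ℤ) - j).natAbs
  have hleft : (if 0 < (i : ℕ) then a ^ 2 * g i - a * g (i - 1) else 0)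
      = if (j : ℕ) < i then -(1 - a ^ 2) * g i else 0 := by
    rcases Nat.eq_zero_or_pos (i : ℕ) with hi | hi
    · simp [hi]
    obtain ⟨i', hi'⟩ : ∃ i', (i : ℕ) = i' + 1 := ⟨i - 1, by omega⟩
    rw [if_pos hi]
    simp only [g, hi', Nat.add_sub_cancel]
    split_ifs with hj
    · rw [pow_natAbs_sub_succ_left a (by omega : (j : ℕ) ≤ i')]; ring
    · rw [pow_natAbs_sub_succ_right a (by omega : i' < j)]; ring
  have hright : (if (i : ℕ) + 1 < t then a ^ 2 * g i - a * g (i + 1) else 0)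
      = if (i : ℕ) < j then -(1 - a ^ 2) * g i else 0 := by
    by_cases hi : (i : ℕ) + 1 < t
    · simp only [g, if_pos hi]
      split_ifs with hj
      · rw [pow_natAbs_sub_succ_right a hj]; ring
      · rw [pow_natAbs_sub_succ_left a (by omega : (j : ℕ) ≤ i)]; ring
    · simp [hi, show ¬(i : ℕ) < j by omega]
  rw [mul_apply, Matrix.smul_apply, one_apply]
  simp only [ar1Prec, ar1Corr, of_apply]
  rw [Fin.sum_univ_eq_sum_range (fun k => ar1PrecEntry t a i k * g k),
    sum_range_ar1PrecEntry_mul g i.isLt, hleft, hright]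
  rcases lt_trichotomy (i : ℕ) j with h | h | h
  · simp [h, h.not_gt, Fin.ne_of_val_ne h.ne]; ring
  · simp [g, Fin.ext h]
  · simp [h, h.not_gt, Fin.ne_of_val_ne h.ne']; ring

theorem one_dotProduct_ar1Prec_mulVec_one (ht : 1 ≤ t) :
    (fun _ => (1 : R)) ⬝ᵥ (ar1Prec t a *ᵥ fun _ => 1)
      = t - 2 * (t - 1) * a + (t - 2) * a ^ 2 := by
  have hrow : ∀ i ∈ range t, ∑ k ∈ range t, ar1PrecEntry t a i k
      = (1 - a ^ 2) + (if 0 < i then a ^ 2 - a else 0) + (if i + 1 < t then a ^ 2 - a else 0) := by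
    intro i hi
    simpa using sum_range_ar1PrecEntry_mul (fun _ => (1 : R)) (mem_range.mp hi)
  simp only [dotProduct, mulVec, ar1Prec, of_apply, mul_one, one_mul]
  rw [Fin.sum_univ_eq_sum_range (fun i => ∑ k : Fin t, ar1PrecEntry t a i k)]
  simp only [Fin.sum_univ_eq_sum_range (ar1PrecEntry t a _)]
  rw [sum_congr rfl hrow]
  obtain ⟨s, rfl⟩ : ∃ s, t = s + 1 := ⟨t - 1, by omega⟩
  rw [sum_add_distrib, sum_add_distrib, sum_range_succ' (fun i => if 0 < i then _ else _),
    sum_range_succ (fun i => if i + 1 < s + 1 then _ else _)]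
  simp [sum_ite_of_true (fun x hx => mem_range.mp hx)]
  ring

end AR1

theorem inv_ar1Corr {K : Type*} [Field K] {t : ℕ} {a : K} (ha : 1 - a ^ 2 ≠ 0) :
    (ar1Corr t a)⁻¹ = (1 - a ^ 2)⁻¹ • ar1Prec t a :=
  inv_eq_left_inv <| by
    rw [smul_mul_assoc, ar1Prec_mul_ar1Corr, smul_smul, inv_mul_cancel₀ ha, one_smul]

/-- For λ ∈ (0,1) and V the t×t matrix with V_{ij} = λ^{|i−j|},
1ᵀV⁻¹1 = (t − 2(t−1)λ + (t−2)λ²)/(1−λ²), and this quantity is strictly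
positive. -/
theorem stmt12 {t : ℕ} (ht : 2 ≤ t) (lam : ℝ) (hlam : lam ∈ Set.Ioo (0 : ℝ) 1)
    (V : Matrix (Fin t) (Fin t) ℝ)
    (hV : ∀ i j, V i j = lam ^ (((i : ℤ) - (j : ℤ)).natAbs)) :
    (fun _ => (1 : ℝ)) ⬝ᵥ (V⁻¹ *ᵥ fun _ => (1 : ℝ))
        = ((t : ℝ) - 2 * ((t : ℝ) - 1) * lam + ((t : ℝ) - 2) * lam ^ 2) / (1 - lam ^ 2)
      ∧ 0 < ((t : ℝ) - 2 * ((t : ℝ) - 1) * lam + ((t : ℝ) - 2) * lam ^ 2) / (1 - lam ^ 2) := by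
  obtain ⟨h0, h1⟩ := hlam
  have hden : 0 < 1 - lam ^ 2 := by nlinarith
  have hV' : V = ar1Corr t lam := by ext i j; exact hV i j
  refine ⟨?_, div_pos ?_ hden⟩
  · rw [hV', inv_ar1Corr hden.ne', smul_mulVec, dotProduct_smul,
      one_dotProduct_ar1Prec_mulVec_one (by omega), smul_eq_mul, inv_mul_eq_div]
  · have ht' : (0 : ℝ) ≤ t := t.cast_nonneg
    nlinarith [mul_nonneg ht' (sq_nonneg (1 - lam)), mul_pos h0 (sub_pos.mpr h1)]
end

section
/- For symmetric positive definite t×t matrices A and B with equal determinants and A ≠ B, det(A + B) > 2^t·det(A). -/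
/-!
Write `A = Gᴴ G` and `B = Gᴴ C G` with `G` invertible and `C` positive definite. Then
`det C = 1`, `C ≠ 1` and `det (A + B) = det A · det (1 + C) = det A · ∏ (1 + μᵢ)` over the
eigenvalues `μᵢ > 0` of `C`. Since `4 μ ≤ (1 + μ)²` with equality only at `μ = 1`, and
`∏ μᵢ = 1` with some `μᵢ ≠ 1`, we get `(∏ (1 + μᵢ))² > ∏ 4 μᵢ = 4ᵗ`.
-/

open Matrix

lemma four_mul_lt_one_add_sq {x : ℝ} (hx : x ≠ 1) : 4 * x < (1 + x) ^ 2 := by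
  have : 0 < (x - 1) ^ 2 := by positivity [sub_ne_zero.mpr hx]
  nlinarith

lemma two_pow_card_lt_prod_one_add {ι : Type*} [Fintype ι] {μ : ι → ℝ} (hpos : ∀ i, 0 < μ i)
    (hprod : ∏ i, μ i = 1) (hne : ∃ i, μ i ≠ 1) : (2 : ℝ) ^ Fintype.card ι < ∏ i, (1 + μ i) := by
  obtain ⟨j, hj⟩ := hne
  have hsq : ∏ i, 4 * μ i < ∏ i, (1 + μ i) ^ 2 :=
    Finset.prod_lt_prod (fun i _ => by linarith [hpos i])
      (fun i _ => by nlinarith [sq_nonneg (μ i - 1)])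
      ⟨j, Finset.mem_univ j, four_mul_lt_one_add_sq hj⟩
  rw [Finset.prod_mul_distrib, hprod, mul_one, Finset.prod_const, Finset.card_univ,
    Finset.prod_pow] at hsq
  refine lt_of_pow_lt_pow_left₀ 2 (Finset.prod_nonneg fun i _ => by linarith [hpos i]) ?_
  rwa [← pow_mul, mul_comm, pow_mul, show (2 : ℝ) ^ 2 = 4 by norm_num]

namespace Matrix

variable {n : Type*} [Fintype n] [DecidableEq n]

lemma det_star_mul_mul {R : Type*} [CommRing R] [Star R] (G X : Matrix n n R) :
    det (star G * X * G) = det (star G * G) * det X := by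
  rw [det_mul, det_mul, det_mul]
  ring

section RCLike

variable {𝕜 : Type*} [RCLike 𝕜]

namespace IsHermitian

variable {C : Matrix n n 𝕜} (hC : C.IsHermitian)
include hC

lemma det_one_add_s14 : det (1 + C) = ∏ i, (1 + (hC.eigenvalues i : 𝕜)) := by
  conv_lhs =>
    rw [hC.spectral_theorem, ← map_one (Unitary.conjStarAlgAut 𝕜 _ hC.eigenvectorUnitary),
      ← map_add, Unitary.conjStarAlgAut_apply, det_mul_comm, ← mul_assoc]
  simp [← diagonal_one, diagonal_add]

lemma eq_one_of_eigenvalues_eq_one (h : hC.eigenvalues = 1) : C = 1 := by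
  rw [hC.spectral_theorem, h]
  simp

end IsHermitian

open scoped ComplexOrder MatrixOrder in
lemma PosDef.exists_eq_star_mul_self_and_eq_star_mul_mul {A B : Matrix n n 𝕜} (hA : A.PosDef)
    (hB : B.PosDef) :
    ∃ G C : Matrix n n 𝕜, C.PosDef ∧ A = star G * G ∧ B = star G * C * G := by
  obtain ⟨G, hG, rfl⟩ :=
    CStarAlgebra.isStrictlyPositive_iff_eq_star_mul_self.mp hA.isStrictlyPositive
  lift G to (Matrix n n 𝕜)ˣ using hG
  let H : Matrix n n 𝕜 := ↑G⁻¹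
  have hHG : H * G = 1 := G.inv_mul
  refine ⟨G, star H * B * H, ?_, rfl, ?_⟩
  · exact (IsUnit.posDef_star_left_conjugate_iff G⁻¹.isUnit).mpr hB
  · rw [mul_assoc, mul_assoc, hHG, mul_one, ← mul_assoc, ← star_mul, hHG, star_one, one_mul]

end RCLike

lemma PosDef.two_pow_card_lt_det_one_add {C : Matrix n n ℝ} (hC : C.PosDef) (hdet : C.det = 1)
    (hne : C ≠ 1) : (2 : ℝ) ^ Fintype.card n < det (1 + C) := by
  rw [hC.1.det_one_add_s14]
  refine two_pow_card_lt_prod_one_add hC.eigenvalues_pos ?_ ?_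
  · simpa [hC.1.det_eq_prod_eigenvalues] using hdet
  · by_contra! h
    exact hne (hC.1.eq_one_of_eigenvalues_eq_one (funext h))

end Matrix

/-- Strict Minkowski determinant inequality consequence: for symmetric
positive definite matrices A, B with det(A) = det(B) and A ≠ B,
det(A + B) > 2^t·det(A). -/
theorem stmt14 {t : ℕ} (A B : Matrix (Fin t) (Fin t) ℝ)
    (hA : A.PosDef) (hB : B.PosDef) (hdet : A.det = B.det) (hne : A ≠ B) :
    (2 : ℝ) ^ t * A.det < (A + B).det := by
  obtain ⟨G, C, hC, rfl, rfl⟩ := hA.exists_eq_star_mul_self_and_eq_star_mul_mul hB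
  have hdetC : C.det = 1 := by
    rw [det_star_mul_mul] at hdet
    exact (mul_eq_left₀ hA.det_pos.ne').mp hdet.symm
  have hC1 : C ≠ 1 := by
    rintro rfl
    exact hne (by rw [mul_one])
  rw [show star G * G + star G * C * G = star G * (1 + C) * G by noncomm_ring,
    det_star_mul_mul, mul_comm]
  simpa using mul_lt_mul_of_pos_left (hC.two_pow_card_lt_det_one_add hdetC hC1) hA.det_pos
end

section
/- In the two-block setting with P = 1 ⊕ Q ⊕ 1 (a permutation fixing first and last coordinates) and V the AR(1)-type matrix V_{ij} = λ^{|i−j|}, the upper-left t×t block of (Z^T R_0^{-1} Z)^{-1} equals σ²(V^{-1} + P^T V^{-1} P)^{-1}. -/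
/-!
The AR(1) covariance `V` has the tridiagonal inverse `(1 - λ²)⁻¹ (D - λ (L + Lᵀ))`, with `L` the
subdiagonal shift and `D = diag(1, 1 + λ², …, 1 + λ², 1)`. Its column sums `1ᵀ V⁻¹` only depend on
whether the index is an endpoint, so a permutation fixing both endpoints leaves `1ᵀ V⁻¹` unchanged.
This kills the off-diagonal blocks of `Zᵀ R₀⁻¹ Z`, which is therefore block diagonal with upper block
`σ⁻² (V⁻¹ + Pᵀ V⁻¹ P)` and lower block `2 σ⁻² 1ᵀ V⁻¹ 1 > 0`.
-/

open Matrix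

section BlockMatrix

variable {m n K : Type*} [Fintype n] [DecidableEq n]

theorem Matrix.inv_smul_of_ne_zero [Field K] (A : Matrix n n K) {c : K} (hc : c ≠ 0) :
    (c • A)⁻¹ = c⁻¹ • A⁻¹ := by
  by_cases hA : IsUnit A.det
  · exact inv_smul' A (Units.mk0 c hc) hA
  · have hcA : ¬IsUnit (c • A).det := by simpa [det_smul, hc] using hA
    rw [nonsing_inv_apply_not_isUnit _ hA, nonsing_inv_apply_not_isUnit _ hcA, smul_zero]

/-- When `A` is singular both sides are `0`, so only `D` has to be invertible. -/
theorem Matrix.toBlocks₁₁_inv_fromBlocks_zero_zero [Fintype m] [DecidableEq m] [CommRing K]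
    (A : Matrix m m K) {D : Matrix n n K} (hD : IsUnit D) :
    (fromBlocks A 0 0 D)⁻¹.toBlocks₁₁ = A⁻¹ := by
  by_cases hA : IsUnit A
  · simp [inv_fromBlocks_zero₂₁_of_isUnit_iff A 0 D (iff_of_true hA hD)]
  · have hAD : ¬IsUnit (fromBlocks A 0 0 D) := by simp [hA]
    rw [nonsing_inv_eq_ringInverse, nonsing_inv_eq_ringInverse, Ring.inverse_non_unit _ hA,
      Ring.inverse_non_unit _ hAD]
    rfl

theorem Matrix.fromBlocks_transpose_mul_mul_of_isSymm [CommRing K] {W : Matrix n n K}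
    (P : Matrix n n K) (J : Matrix n m K) (hW : W.IsSymm) (hP : Jᵀ * W * P = Jᵀ * W) :
    (fromBlocks 1 J P (-J))ᵀ * fromBlocks W 0 0 W * fromBlocks 1 J P (-J) =
      fromBlocks (W + Pᵀ * W * P) 0 0 (Jᵀ * W * J + Jᵀ * W * J) := by
  have h₂₁ : Jᵀ * W - Jᵀ * (W * P) = 0 := by rw [← Matrix.mul_assoc, hP, sub_self]
  have h₁₂ : W * J - Pᵀ * (W * J) = 0 := by
    simpa [transpose_mul, hW.eq, Matrix.mul_assoc] using congrArg transpose h₂₁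
  rw [fromBlocks_transpose, fromBlocks_multiply, fromBlocks_multiply]
  simp [Matrix.mul_assoc, ← sub_eq_add_neg, h₁₂, h₂₁]

end BlockMatrix

section LowerShift

variable (R : Type*) [NonAssocSemiring R] {t : ℕ}

def lowerShift (t : ℕ) : Matrix (Fin t) (Fin t) R :=
  of fun i j => if (i : ℕ) = j + 1 then 1 else 0

variable {R}

theorem vecMul_lowerShift (x : Fin t → R) (j : Fin t) :
    (x ᵥ* lowerShift R t) j = if h : (j : ℕ) + 1 < t then x ⟨j + 1, h⟩ else 0 := by
  simp only [vecMul, dotProduct, lowerShift, of_apply, mul_ite, mul_one, mul_zero]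
  split_ifs with h
  · simp [← Fin.ext_iff (b := ⟨j + 1, h⟩)]
  · exact Finset.sum_eq_zero fun i _ => if_neg (by omega)

theorem vecMul_lowerShift_transpose (x : Fin t → R) (j : Fin t) :
    (x ᵥ* (lowerShift R t)ᵀ) j = if h : 1 ≤ (j : ℕ) then x ⟨j - 1, by omega⟩ else 0 := by
  simp only [vecMul, dotProduct, lowerShift, transpose_apply, of_apply, mul_ite, mul_one,
    mul_zero]
  split_ifs with h
  · have hj (i : Fin t) : (j : ℕ) = i + 1 ↔ i = ⟨j - 1, by omega⟩ := by
      simp only [Fin.ext_iff]; omega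
    simp [hj]
  · exact Finset.sum_eq_zero fun i _ => if_neg (by omega)

end LowerShift

section PowNatAbs

variable {R : Type*} [CommRing R] (lam : R) (m : ℤ)

theorem pow_natAbs_three_term :
    (1 + lam ^ 2) * lam ^ m.natAbs - lam * (lam ^ (m - 1).natAbs + lam ^ (m + 1).natAbs) =
      if m = 0 then 1 - lam ^ 2 else 0 := by
  rcases lt_trichotomy m 0 with h | rfl | h
  · rw [if_neg h.ne, show m.natAbs = (m + 1).natAbs + 1 by omega,
      show (m - 1).natAbs = (m + 1).natAbs + 2 by omega]
    ring
  · simp; ring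
  · rw [if_neg h.ne', show m.natAbs = (m - 1).natAbs + 1 by omega,
      show (m + 1).natAbs = (m - 1).natAbs + 2 by omega]
    ring

theorem pow_natAbs_sub_mul_pow_natAbs_sub_one (hm : 0 ≤ m) :
    lam ^ m.natAbs - lam * lam ^ (m - 1).natAbs = if m = 0 then 1 - lam ^ 2 else 0 := by
  rcases hm.eq_or_lt with rfl | h
  · simp; ring
  · rw [if_neg h.ne', show m.natAbs = (m - 1).natAbs + 1 by omega]
    ring

theorem pow_natAbs_sub_mul_pow_natAbs_add_one (hm : m ≤ 0) :
    lam ^ m.natAbs - lam * lam ^ (m + 1).natAbs = if m = 0 then 1 - lam ^ 2 else 0 := by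
  have h := pow_natAbs_sub_mul_pow_natAbs_sub_one lam (-m) (by omega)
  simp only [Int.natAbs_neg, neg_eq_zero, show (-m - 1).natAbs = (m + 1).natAbs by omega] at h
  exact h

end PowNatAbs

theorem Equiv.Perm.apply_mem_iff_of_forall_mem_eq {α : Type*} (σ : Equiv.Perm α) {s : Set α}
    (hs : ∀ a ∈ s, σ a = a) (a : α) : σ a ∈ s ↔ a ∈ s :=
  ⟨fun h => σ.injective (hs _ h) ▸ h, fun h => (hs a h).symm ▸ h⟩

section AR1

variable {K : Type*} [Field K] {t : ℕ}

abbrev IsEndpoint (i : Fin t) : Prop := (i : ℕ) = 0 ∨ (i : ℕ) = t - 1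

def ar1Covariance (t : ℕ) (lam : K) : Matrix (Fin t) (Fin t) K :=
  of fun i j => lam ^ ((i : ℤ) - j).natAbs

def ar1PrecisionDiag (t : ℕ) (lam : K) (i : Fin t) : K :=
  if IsEndpoint i then 1 else 1 + lam ^ 2

def ar1Precision (t : ℕ) (lam : K) : Matrix (Fin t) (Fin t) K :=
  (1 - lam ^ 2)⁻¹ •
    (diagonal (ar1PrecisionDiag t lam) - lam • (lowerShift K t + (lowerShift K t)ᵀ))

def ar1ColSum (t : ℕ) (lam : K) (j : Fin t) : K :=
  (1 - lam ^ 2)⁻¹ * if IsEndpoint j then 1 - lam else (1 - lam) ^ 2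

theorem vecMul_ar1Precision (lam : K) (x : Fin t → K) (j : Fin t) :
    (x ᵥ* ar1Precision t lam) j = (1 - lam ^ 2)⁻¹ * (ar1PrecisionDiag t lam j * x j -
      lam * ((if h : (j : ℕ) + 1 < t then x ⟨j + 1, h⟩ else 0) +
        if h : 1 ≤ (j : ℕ) then x ⟨j - 1, by omega⟩ else 0)) := by
  simp only [ar1Precision, vecMul_smul, vecMul_sub, vecMul_add, vecMul_diagonal, Pi.smul_apply,
    Pi.sub_apply, Pi.add_apply, vecMul_lowerShift, vecMul_lowerShift_transpose, smul_eq_mul]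
  ring

theorem ar1Covariance_mul_ar1Precision (ht : 2 ≤ t) {lam : K} (hlam : 1 - lam ^ 2 ≠ 0) :
    ar1Covariance t lam * ar1Precision t lam = 1 := by
  ext i j
  rw [mul_apply_eq_vecMul, vecMul_ar1Precision, one_apply]
  set m : ℤ := (i : ℤ) - j
  have hij : i = j ↔ m = 0 := by simp only [m, Fin.ext_iff]; omega
  have hmid : ar1Covariance t lam i j = lam ^ m.natAbs := rfl
  have hup (h : (j : ℕ) + 1 < t) : ar1Covariance t lam i ⟨j + 1, h⟩ = lam ^ (m - 1).natAbs := by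
    simp only [ar1Covariance, of_apply, m]; congr 2; push_cast; ring
  have hdown (h : 1 ≤ (j : ℕ)) :
      ar1Covariance t lam i ⟨j - 1, by omega⟩ = lam ^ (m + 1).natAbs := by
    simp only [ar1Covariance, of_apply, m]; congr 2; push_cast [h]; ring
  suffices h : ar1PrecisionDiag t lam j * ar1Covariance t lam i j - lam *
      ((if h : (j : ℕ) + 1 < t then ar1Covariance t lam i ⟨j + 1, h⟩ else 0) +
        if h : 1 ≤ (j : ℕ) then ar1Covariance t lam i ⟨j - 1, by omega⟩ else 0) =
      if m = 0 then 1 - lam ^ 2 else 0 by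
    rw [h]
    by_cases hm : m = 0 <;> simp [hm, hij, hlam]
  simp only [ar1PrecisionDiag, hmid]
  by_cases hj0 : (j : ℕ) = 0
  · rw [if_pos (Or.inl hj0), dif_pos (by omega), dif_neg (by omega), hup, add_zero, one_mul]
    exact pow_natAbs_sub_mul_pow_natAbs_sub_one lam m (by omega)
  by_cases hjt : (j : ℕ) = t - 1
  · rw [if_pos (Or.inr hjt), dif_neg (by omega), dif_pos (by omega), hdown (by omega), zero_add,
      one_mul]
    exact pow_natAbs_sub_mul_pow_natAbs_add_one lam m (by omega)
  · rw [if_neg (by omega), dif_pos (by omega), dif_pos (by omega), hup, hdown (by omega)]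
    exact pow_natAbs_three_term lam m

theorem inv_ar1Covariance (ht : 2 ≤ t) {lam : K} (hlam : 1 - lam ^ 2 ≠ 0) :
    (ar1Covariance t lam)⁻¹ = ar1Precision t lam :=
  inv_eq_right_inv (ar1Covariance_mul_ar1Precision ht hlam)

theorem isSymm_ar1Precision (lam : K) : (ar1Precision t lam).IsSymm := by
  simp only [IsSymm, ar1Precision, transpose_smul, transpose_sub, transpose_add,
    diagonal_transpose, transpose_transpose, add_comm]

theorem one_vecMul_ar1Precision (ht : 2 ≤ t) (lam : K) :
    1 ᵥ* ar1Precision t lam = ar1ColSum t lam := by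
  ext j
  simp only [vecMul_ar1Precision, ar1ColSum, ar1PrecisionDiag, Pi.one_apply]
  congr 1
  by_cases hj0 : (j : ℕ) = 0
  · rw [if_pos (Or.inl hj0), if_pos (Or.inl hj0), dif_pos (by omega), dif_neg (by omega)]
    ring
  by_cases hjt : (j : ℕ) = t - 1
  · rw [if_pos (Or.inr hjt), if_pos (Or.inr hjt), dif_neg (by omega), dif_pos (by omega)]
    ring
  · rw [if_neg (by omega), if_neg (by omega), dif_pos (by omega), dif_pos (by omega)]
    ring

theorem ar1ColSum_vecMul_permMatrix (lam : K) (σ : Equiv.Perm (Fin t))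
    (hσ : ∀ i, IsEndpoint i → σ i = i) :
    ar1ColSum t lam ᵥ* σ.permMatrix K = ar1ColSum t lam := by
  ext j
  have h : IsEndpoint (σ.symm j) ↔ IsEndpoint j := by
    simpa using (σ.apply_mem_iff_of_forall_mem_eq (s := {i | IsEndpoint i}) hσ (σ.symm j)).symm
  simp only [vecMul_permMatrix, Function.comp_apply, ar1ColSum, h]

end AR1

theorem ar1ColSum_pos {t : ℕ} {lam : ℝ} (hlam : lam ∈ Set.Ioo 0 1) (j : Fin t) :
    0 < ar1ColSum t lam j := by
  obtain ⟨hl0, hl1⟩ := hlam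
  have h1 : 0 < 1 - lam := by linarith
  refine mul_pos (inv_pos.2 (by nlinarith)) ?_
  split_ifs
  exacts [h1, pow_pos h1 2]

/-- In the two-block setting with P = 1 ⊕ Q ⊕ 1 (a permutation fixing the
first and last coordinates) and V the AR(1)-type matrix V_{ij} = λ^{|i−j|},
the upper-left t×t block of (ZᵀR₀⁻¹Z)⁻¹ equals σ²·(V⁻¹ + PᵀV⁻¹P)⁻¹.
Here σ2 denotes σ². -/
theorem stmt18 {t : ℕ} (ht : 2 ≤ t) (σ2 : ℝ) (hσ2 : 0 < σ2)
    (lam : ℝ) (hlam : lam ∈ Set.Ioo (0 : ℝ) 1)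
    (V : Matrix (Fin t) (Fin t) ℝ)
    (hV : ∀ i j, V i j = lam ^ (((i : ℤ) - (j : ℤ)).natAbs))
    (σ : Equiv.Perm (Fin t))
    (h0 : ∀ i : Fin t, (i : ℕ) = 0 → σ i = i)
    (hlast : ∀ i : Fin t, (i : ℕ) = t - 1 → σ i = i)
    (P : Matrix (Fin t) (Fin t) ℝ) (hP : P = σ.permMatrix ℝ)
    (Z : Matrix (Fin t ⊕ Fin t) (Fin t ⊕ Fin 1) ℝ)
    (hZ : Z = fromBlocks 1 (fun _ _ => 1) P (fun _ _ => -1))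
    (R0 : Matrix (Fin t ⊕ Fin t) (Fin t ⊕ Fin t) ℝ)
    (hR0 : R0 = fromBlocks (σ2 • V) 0 0 (σ2 • V)) :
    ((Zᵀ * R0⁻¹ * Z)⁻¹).toBlocks₁₁ = σ2 • (V⁻¹ + Pᵀ * V⁻¹ * P)⁻¹ := by
  have hVinv : V⁻¹ = ar1Precision t lam := by
    rw [← inv_ar1Covariance ht (by nlinarith [hlam.1, hlam.2])]
    exact congrArg _ (Matrix.ext hV)
  set J : Matrix (Fin t) (Fin 1) ℝ := replicateCol (Fin 1) 1 with hJ
  set W := σ2⁻¹ • ar1Precision t lam with hW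
  have hR0inv : R0⁻¹ = fromBlocks W 0 0 W := by
    rw [hR0, inv_fromBlocks_zero₂₁_of_isUnit_iff _ _ _ Iff.rfl, inv_smul_of_ne_zero _ hσ2.ne',
      hVinv]
    simp [hW]
  have hrow : Jᵀ * W = σ2⁻¹ • replicateRow (Fin 1) (ar1ColSum t lam) := by
    rw [hJ, hW, Matrix.mul_smul, transpose_replicateCol, ← replicateRow_vecMul,
      one_vecMul_ar1Precision ht]
  have hWP : Jᵀ * W * P = Jᵀ * W := by
    rw [hrow, hP, Matrix.smul_mul, ← replicateRow_vecMul,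
      ar1ColSum_vecMul_permMatrix lam σ fun i hi => hi.elim (h0 i) (hlast i)]
  have hD : IsUnit (Jᵀ * W * J + Jᵀ * W * J) := by
    have hsum := Finset.sum_pos (fun j _ => ar1ColSum_pos hlam j)
      (Finset.univ_nonempty_iff.2 ⟨(⟨0, by omega⟩ : Fin t)⟩)
    rw [isUnit_iff_isUnit_det, det_unique, isUnit_iff_ne_zero, hrow]
    simp [hJ, dotProduct, hσ2.ne', hsum.ne']
  rw [hZ, hR0inv, show (fun _ _ => -1 : Matrix (Fin t) (Fin 1) ℝ) = -J from rfl,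
    show (fun _ _ => 1 : Matrix (Fin t) (Fin 1) ℝ) = J from rfl,
    fromBlocks_transpose_mul_mul_of_isSymm P J ((isSymm_ar1Precision lam).smul σ2⁻¹) hWP,
    toBlocks₁₁_inv_fromBlocks_zero_zero _ hD, hVinv]
  simp only [Matrix.mul_smul, Matrix.smul_mul, ← smul_add]
  rw [inv_smul_of_ne_zero _ (inv_ne_zero hσ2.ne'), inv_inv]
end
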